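/- Let A be a real symmetric n×n matrix, O a real orthogonal n×n matrix, X = (1+A²)^{-1/2}O, Y = A(1+A²)^{-1/2}O, S = fromBlocks X (−Y) Y X, and for s > 0 let Γ_sqz(n,s) = diag(s,…,s,s⁻¹,…,s⁻¹) (n entries s followed by n entries s⁻¹). Let Γ_G = S · Γ_sqz(n,s) · Sᵀ be the covariance matrix of the finitely squeezed cluster state. Then for the n×2n nullifier matrix N = [−A | 1ₙ] (i.e., N·(Q,P)ᵀ = P − AQ), one has N Γ_G Nᵀ = s⁻¹(1 + A²). In particular the nullifier covariance tends to 0 as s → ∞. -/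

import Mathlib

/-! The nullifier matrix kills the `Q`-block column of the symplectic matrix `S`:
`N S = [0 | (1 + A²) X]`, and `(1 + A²) X = (1 + A²)^{1/2} O`. Hence only the `s⁻¹`-squeezed
`P`-quadratures reach the nullifiers, `N Γ_G Nᵀ = s⁻¹ C Cᵀ` with `C = (1 + A²)^{1/2} O`, and
`C Cᵀ = 1 + A²` because `O` is orthogonal. -/

open Matrix

noncomputable section

/-- For a real symmetric matrix `A`, the matrix `1 + A²` is positive definite. -/
theorem onePlusSq_posDef {n : ℕ} (A : Matrix (Fin n) (Fin n) ℝ) (hA : Aᵀ = A) :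
    (1 + A * A).PosDef := by
  have h2 : (A * A).PosSemidef := by
    have h := Matrix.posSemidef_conjTranspose_mul_self A
    simpa [Matrix.conjTranspose_eq_transpose_of_trivial, hA] using h
  exact Matrix.PosDef.add_posSemidef Matrix.PosDef.one h2

/-- The positive semidefinite square root of a positive semidefinite matrix
(the former Mathlib `Matrix.PosSemidef.sqrt`, removed upstream). -/
def posSemidefSqrt {n : ℕ} {M : Matrix (Fin n) (Fin n) ℝ} (hM : M.PosSemidef) :
    Matrix (Fin n) (Fin n) ℝ :=
  hM.1.eigenvectorUnitary.1 * diagonal ((↑) ∘ Real.sqrt ∘ hM.1.eigenvalues) *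
    (star hM.1.eigenvectorUnitary : Matrix (Fin n) (Fin n) ℝ)

/-- `(1 + A²)^{-1/2}`: the inverse of the unique positive-definite square root of `1 + A²`. -/
def invSqrtOnePlusSq {n : ℕ} (A : Matrix (Fin n) (Fin n) ℝ) (hA : Aᵀ = A) :
    Matrix (Fin n) (Fin n) ℝ :=
  (posSemidefSqrt (onePlusSq_posDef A hA).posSemidef)⁻¹

/-- Covariance matrix `diag(s,…,s,s⁻¹,…,s⁻¹)` of `n` equally squeezed vacuum modes,
in quadrature ordering `(Q₁,…,Qₙ,P₁,…,Pₙ)`. -/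
def GammaSqz (n : ℕ) (s : ℝ) : Matrix (Fin n ⊕ Fin n) (Fin n ⊕ Fin n) ℝ :=
  Matrix.fromBlocks (s • 1) 0 0 (s⁻¹ • 1)

section BlockAlgebra

variable {m R : Type*} [Fintype m] [DecidableEq m]

theorem fromCols_neg_one_mul_fromBlocks [Ring R] (A X : Matrix m m R) :
    Matrix.fromCols (-A) (1 : Matrix m m R) * fromBlocks X (-(A * X)) (A * X) X =
      Matrix.fromCols 0 ((1 + A * A) * X) := by
  rw [fromCols_mul_fromBlocks]
  congr 1 <;> noncomm_ring

theorem fromCols_zero_mul_fromBlocks_smul_one_mul_transpose {l : Type*} [CommRing R]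
    (C : Matrix l m R) (a b : R) :
    Matrix.fromCols (0 : Matrix l m R) C *
        fromBlocks (a • 1 : Matrix m m R) 0 0 (b • 1 : Matrix m m R) *
        (Matrix.fromCols (0 : Matrix l m R) C)ᵀ = b • (C * Cᵀ) := by
  rw [fromCols_mul_fromBlocks, transpose_fromCols, fromCols_mul_fromRows]
  simp

end BlockAlgebra

theorem posSemidefSqrt_mul_self {n : ℕ} {M : Matrix (Fin n) (Fin n) ℝ} (hM : M.PosSemidef) :
    posSemidefSqrt hM * posSemidefSqrt hM = M := by
  have hU := Unitary.coe_star_mul_self hM.1.eigenvectorUnitary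
  conv_rhs => rw [hM.1.spectral_theorem, Unitary.conjStarAlgAut_apply]
  rw [posSemidefSqrt]
  simp only [Matrix.mul_assoc]
  rw [← Matrix.mul_assoc (star _) _ _, hU, Matrix.one_mul,
    ← Matrix.mul_assoc (diagonal _) (diagonal _), diagonal_mul_diagonal]
  congr 3
  funext i
  simp [Real.mul_self_sqrt (hM.eigenvalues_nonneg i)]

theorem posSemidefSqrt_transpose {n : ℕ} {M : Matrix (Fin n) (Fin n) ℝ} (hM : M.PosSemidef) :
    (posSemidefSqrt hM)ᵀ = posSemidefSqrt hM := by
  simp [posSemidefSqrt, transpose_mul, star_eq_conjTranspose,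
    conjTranspose_eq_transpose_of_trivial, Matrix.mul_assoc]

section InvSqrtOnePlusSq

variable {n : ℕ} (A : Matrix (Fin n) (Fin n) ℝ) (hA : Aᵀ = A)

theorem invSqrtOnePlusSq_transpose : (invSqrtOnePlusSq A hA)ᵀ = invSqrtOnePlusSq A hA := by
  rw [invSqrtOnePlusSq, transpose_nonsing_inv, posSemidefSqrt_transpose]

theorem invSqrtOnePlusSq_mul_self :
    invSqrtOnePlusSq A hA * invSqrtOnePlusSq A hA = (1 + A * A)⁻¹ := by
  rw [invSqrtOnePlusSq, ← Matrix.mul_inv_rev, posSemidefSqrt_mul_self]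

theorem onePlusSq_mul_invSqrtOnePlusSq_mul_orthogonal {O : Matrix (Fin n) (Fin n) ℝ}
    (hO : Oᵀ * O = 1) :
    (1 + A * A) * (invSqrtOnePlusSq A hA * O) * ((1 + A * A) * (invSqrtOnePlusSq A hA * O))ᵀ =
      1 + A * A := by
  set M := 1 + A * A
  set B := invSqrtOnePlusSq A hA
  have hMT : Mᵀ = M := by simp [M, transpose_mul, hA]
  have hdet : IsUnit M.det := (isUnit_iff_isUnit_det M).mp (onePlusSq_posDef A hA).isUnit
  calc M * (B * O) * (M * (B * O))ᵀ = M * B * (O * Oᵀ) * B * M := by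
        rw [transpose_mul, transpose_mul, invSqrtOnePlusSq_transpose, hMT]
        noncomm_ring
    _ = M * (M⁻¹ * M) := by
        rw [mul_eq_one_comm.mp hO, ← invSqrtOnePlusSq_mul_self A hA]
        noncomm_ring
    _ = M := by rw [Matrix.nonsing_inv_mul M hdet, Matrix.mul_one]

theorem nullifier_covariance_eq {O : Matrix (Fin n) (Fin n) ℝ} (hO : Oᵀ * O = 1) (s : ℝ) :
    Matrix.fromCols (-A) (1 : Matrix (Fin n) (Fin n) ℝ) *
        (fromBlocks (invSqrtOnePlusSq A hA * O) (-(A * invSqrtOnePlusSq A hA * O))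
            (A * invSqrtOnePlusSq A hA * O) (invSqrtOnePlusSq A hA * O) *
          GammaSqz n s *
          (fromBlocks (invSqrtOnePlusSq A hA * O) (-(A * invSqrtOnePlusSq A hA * O))
            (A * invSqrtOnePlusSq A hA * O) (invSqrtOnePlusSq A hA * O))ᵀ) *
        (Matrix.fromCols (-A) 1)ᵀ = s⁻¹ • (1 + A * A) := by
  set N := Matrix.fromCols (-A) (1 : Matrix (Fin n) (Fin n) ℝ)
  have hNS := fromCols_neg_one_mul_fromBlocks A (invSqrtOnePlusSq A hA * O)
  simp only [← Matrix.mul_assoc A] at hNS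
  set S := fromBlocks (invSqrtOnePlusSq A hA * O) (-(A * invSqrtOnePlusSq A hA * O))
    (A * invSqrtOnePlusSq A hA * O) (invSqrtOnePlusSq A hA * O)
  calc N * (S * GammaSqz n s * Sᵀ) * Nᵀ = N * S * GammaSqz n s * (N * S)ᵀ := by
        simp only [transpose_mul, Matrix.mul_assoc]
    _ = s⁻¹ • (1 + A * A) := by
        rw [hNS, GammaSqz, fromCols_zero_mul_fromBlocks_smul_one_mul_transpose,
          onePlusSq_mul_invSqrtOnePlusSq_mul_orthogonal A hA hO]

end InvSqrtOnePlusSq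

/-- For the finitely squeezed cluster state with covariance matrix
`Γ_G = S Γ_sqz(n,s) Sᵀ`, the nullifier matrix `N = [−A | 1]` satisfies
`N Γ_G Nᵀ = s⁻¹ (1 + A²)`; in particular, the nullifier covariance tends
to `0` as `s → ∞`. -/
theorem nullifier_covariance {n : ℕ} (A O : Matrix (Fin n) (Fin n) ℝ)
    (hA : Aᵀ = A) (hO : Oᵀ * O = 1) :
    (∀ s : ℝ, 0 < s →
      Matrix.fromCols (-A) (1 : Matrix (Fin n) (Fin n) ℝ) *
          (Matrix.fromBlocks (invSqrtOnePlusSq A hA * O)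
              (-(A * invSqrtOnePlusSq A hA * O))
              (A * invSqrtOnePlusSq A hA * O) (invSqrtOnePlusSq A hA * O) *
            GammaSqz n s *
            (Matrix.fromBlocks (invSqrtOnePlusSq A hA * O)
                (-(A * invSqrtOnePlusSq A hA * O))
                (A * invSqrtOnePlusSq A hA * O) (invSqrtOnePlusSq A hA * O))ᵀ) *
          (Matrix.fromCols (-A) 1)ᵀ = s⁻¹ • (1 + A * A)) ∧
    Filter.Tendsto
      (fun s : ℝ =>
        Matrix.fromCols (-A) (1 : Matrix (Fin n) (Fin n) ℝ) *
          (Matrix.fromBlocks (invSqrtOnePlusSq A hA * O)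
              (-(A * invSqrtOnePlusSq A hA * O))
              (A * invSqrtOnePlusSq A hA * O) (invSqrtOnePlusSq A hA * O) *
            GammaSqz n s *
            (Matrix.fromBlocks (invSqrtOnePlusSq A hA * O)
                (-(A * invSqrtOnePlusSq A hA * O))
                (A * invSqrtOnePlusSq A hA * O) (invSqrtOnePlusSq A hA * O))ᵀ) *
          (Matrix.fromCols (-A) 1)ᵀ)
      Filter.atTop (nhds (0 : Matrix (Fin n) (Fin n) ℝ)) := by
  have hcov := nullifier_covariance_eq A hA hO
  refine ⟨fun s _ => hcov s, ?_⟩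
  simp only [hcov]
  simpa using (tendsto_inv_atTop_zero (𝕜 := ℝ)).smul_const (1 + A * A)
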